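/- arXiv:1712.00071 — 2 statements merged into one kernel-verified Lean document; each statement's English description precedes it below -/
import Mathlib

section
/- Let F_q be a finite field and d a positive integer. Say a monic polynomial f of degree d in F_q[x] has even type if (-1)^{d - \Omega(f)} = 1, where \Omega(f) is the total number of irreducible factors of f counted with multiplicity. Then 2 times the number of monic polynomials of degree d in F_q[x] with even type equals q^d + q^{\lceil d/2 \rceil}. -/
/-!
With the Liouville function `λ f = (-1) ^ Ω(f)` and `a_k = ∑_{f monic, deg f = k} λ f`, the sum
of `λ` over the monic divisors of a monic `f` is `1` if `f` is a square and `0` otherwise: peel off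
one prime power `p ^ e` at a time, which contributes the factor `∑_{i ≤ e} (-1) ^ i`. Summing this
over monic `f` of degree `n` and counting the `q ^ (n - k)` multiples of degree `n` of each monic `g`
of degree `k` gives `∑_{k ≤ n} q ^ (n - k) a_k = q ^ (n / 2)` for even `n` and `0` for odd `n`
(`λ ⋆ 1` is the indicator of squares, i.e. `L(T) Z(T) = Z(T²)`). Hence
`a_n = (-1) ^ n q ^ ⌈n / 2⌉`, and `(-1) ^ d a_d` is the number of monic polynomials of degree `d`
of even type minus the number of odd type, while their sum is `q ^ d`.
-/

open Polynomial

/-- `Ω(f)`: the number of irreducible factors of `f`, counted with multiplicity. -/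
noncomputable def bigOmega {F : Type*} [Field F] (f : F[X]) : ℕ :=
  Multiset.card (UniqueFactorizationMonoid.factors f)

open Finset UniqueFactorizationMonoid

theorem Finset.two_mul_card_filter_neg_one_pow_eq_one {ι : Type*} (s : Finset ι) (e : ι → ℕ)
    [DecidablePred fun i => (-1 : ℤ) ^ e i = 1] :
    (2 * #(s.filter fun i => (-1 : ℤ) ^ e i = 1) : ℤ) = #s + ∑ i ∈ s, (-1 : ℤ) ^ e i := by
  calc (2 * #(s.filter fun i => (-1 : ℤ) ^ e i = 1) : ℤ)
      = ∑ i ∈ s, 2 * if (-1 : ℤ) ^ e i = 1 then 1 else 0 := by rw [← mul_sum, sum_boole]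
    _ = ∑ i ∈ s, (1 + (-1 : ℤ) ^ e i) :=
        sum_congr rfl fun i _ => by rcases neg_one_pow_eq_or ℤ (e i) with h | h <;> simp [h]
    _ = #s + ∑ i ∈ s, (-1 : ℤ) ^ e i := by rw [sum_add_distrib, sum_const, nsmul_one]

section PrimePowers

variable {α : Type*} [CommMonoidWithZero α] [IsCancelMulZero α] {p a b : α}

theorem Prime.pow_mul_inj (hp : Prime p) (ha : ¬p ∣ a) (hb : ¬p ∣ b) {i j : ℕ} :
    p ^ i * a = p ^ j * b ↔ i = j ∧ a = b := by
  refine ⟨fun h => ?_, fun ⟨hij, hab⟩ => hij ▸ hab ▸ rfl⟩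
  wlog hij : i ≤ j generalizing i j a b
  · exact (this hb ha h.symm (le_of_not_ge hij)).imp Eq.symm Eq.symm
  obtain ⟨k, rfl⟩ := Nat.exists_eq_add_of_le hij
  have hab : a = p ^ k * b :=
    mul_left_cancel₀ (pow_ne_zero i hp.ne_zero) (by rw [h, pow_add, mul_assoc])
  cases k with
  | zero => simpa using hab
  | succ k => exact absurd ⟨p ^ k * b, by rw [hab, pow_succ', mul_assoc]⟩ ha

variable [WfDvdMonoid α]

theorem Prime.isSquare_pow_mul_iff (hp : Prime p) (ha : ¬p ∣ a) (e : ℕ) :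
    IsSquare (p ^ e * a) ↔ Even e ∧ IsSquare a := by
  refine ⟨fun ⟨r, hr⟩ => ?_, fun ⟨⟨t, ht⟩, ⟨s, hs⟩⟩ =>
    ⟨p ^ t * s, by rw [ht, hs, pow_add, mul_mul_mul_comm]⟩⟩
  have hr0 : r ≠ 0 := by
    rintro rfl
    have : a = 0 := mul_left_cancel₀ (pow_ne_zero e hp.ne_zero) (by rw [hr, mul_zero, mul_zero])
    exact ha (this ▸ dvd_zero p)
  obtain ⟨c, hrc, hpc⟩ := (FiniteMultiplicity.of_prime_left hp hr0).exists_eq_pow_mul_and_not_dvd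
  have hpcc : ¬p ∣ c * c := fun h => hpc ((hp.dvd_mul.1 h).elim id id)
  obtain ⟨he, hac⟩ := (hp.pow_mul_inj ha hpcc).1 (by rw [hr, hrc, pow_add, mul_mul_mul_comm])
  exact ⟨⟨_, he⟩, ⟨c, hac⟩⟩

end PrimePowers

section BigOmega

variable {F : Type*} [Field F]

theorem bigOmega_one : bigOmega (1 : F[X]) = 0 := by
  simp [bigOmega]

theorem bigOmega_mul {f g : F[X]} (hf : f ≠ 0) (hg : g ≠ 0) :
    bigOmega (f * g) = bigOmega f + bigOmega g := by
  simpa [bigOmega] using Multiset.card_eq_card_of_rel (factors_mul hf hg)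

theorem Irreducible.bigOmega_eq {p : F[X]} (hp : Irreducible p) : bigOmega p = 1 :=
  card_factors_of_irreducible hp

theorem bigOmega_le_natDegree {f : F[X]} (hf : f ≠ 0) : bigOmega f ≤ f.natDegree := by
  induction f using induction_on_prime with
  | h₁ => exact absurd rfl hf
  | h₂ u hu => simp [bigOmega, factors_of_isUnit hu]
  | h₃ a p ha hp ih =>
    rw [bigOmega_mul hp.ne_zero ha, hp.irreducible.bigOmega_eq, natDegree_mul hp.ne_zero ha]
    have := hp.irreducible.natDegree_pos
    have := ih ha
    omega

end BigOmega

namespace Polynomial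

section Monics

variable (R : Type*) [Ring R] [Fintype R]

noncomputable def monics (n : ℕ) : Finset R[X] :=
  univ.map (((degreeLTEquiv R n).symm.toEquiv.toEmbedding.trans (.subtype _)).trans
    (addLeftEmbedding (X ^ n)))

theorem card_monics (n : ℕ) : #(monics R n) = Fintype.card R ^ n := by
  simp [monics]

variable {R} [Nontrivial R]

theorem mem_monics {n : ℕ} {f : R[X]} : f ∈ monics R n ↔ IsMonicOfDegree f n := by
  simp only [monics, mem_map, mem_univ, true_and]
  constructor
  · rintro ⟨v, rfl⟩
    have hv := mem_degreeLT.1 ((degreeLTEquiv R n).symm v).2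
    refine ⟨?_, monic_X_pow_add hv⟩
    simp [natDegree_add_eq_left_of_degree_lt (hv.trans_eq (degree_X_pow n).symm)]
  · intro hf
    have hdeg : f.degree = n := by rw [degree_eq_natDegree hf.monic.ne_zero, hf.natDegree_eq]
    have hlt : (f - X ^ n).degree < (n : WithBot ℕ) := hdeg ▸ degree_sub_lt_left
      (by rw [hdeg, degree_X_pow]) hf.monic.ne_zero
      (by rw [hf.monic.leadingCoeff, (monic_X_pow n).leadingCoeff])
    exact ⟨degreeLTEquiv R n ⟨f - X ^ n, mem_degreeLT.2 hlt⟩, by simp⟩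

theorem pairwiseDisjoint_monics (s : Set ℕ) : s.PairwiseDisjoint (monics R) :=
  fun _ _ _ _ hmn => disjoint_left.2 fun _ hm hn =>
    hmn ((mem_monics.1 hm).natDegree_eq.symm.trans (mem_monics.1 hn).natDegree_eq)

end Monics

variable {F : Type*} [Field F]

noncomputable def liouville (f : F[X]) : ℤ := (-1) ^ bigOmega f

theorem liouville_mul {f g : F[X]} (hf : f ≠ 0) (hg : g ≠ 0) :
    liouville (f * g) = liouville f * liouville g := by
  rw [liouville, bigOmega_mul hf hg, pow_add, liouville, liouville]

theorem Irreducible.liouville_pow_mul {p g : F[X]} (hp : Irreducible p) (hg : g ≠ 0) (i : ℕ) :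
    liouville (p ^ i * g) = (-1) ^ i * liouville g := by
  induction i with
  | zero => simp
  | succ i ih =>
    rw [pow_succ', mul_assoc, liouville_mul hp.ne_zero (mul_ne_zero (pow_ne_zero i hp.ne_zero) hg),
      ih, liouville, hp.bigOmega_eq, pow_one, pow_succ', mul_assoc]

theorem IsMonicOfDegree.neg_one_pow_sub_bigOmega {f : F[X]} {d : ℕ} (hf : IsMonicOfDegree f d) :
    (-1 : ℤ) ^ (d - bigOmega f) = (-1) ^ d * liouville f := by
  have hle := hf.natDegree_eq ▸ bigOmega_le_natDegree hf.ne_zero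
  rw [liouville, ← pow_sub_mul_pow (-1 : ℤ) hle, mul_assoc, ← pow_add, Even.neg_one_pow ⟨_, rfl⟩,
    mul_one]

theorem Monic.eq_of_mul_self_eq_mul_self {A B : F[X]} (hA : A.Monic) (hB : B.Monic)
    (h : A * A = B * B) : A = B :=
  eq_of_monic_of_associated hA hB <| (mul_self_eq_mul_self_iff.1 h).elim (· ▸ .refl B)
    fun h => h ▸ (Associated.refl B).neg_left

section Divisors

open scoped Classical

variable [Fintype F]

noncomputable def monicDivisors (f : F[X]) : Finset F[X] :=
  ((range (f.natDegree + 1)).biUnion (monics F)).filter (· ∣ f)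

theorem mem_monicDivisors {f g : F[X]} (hf : f ≠ 0) : g ∈ monicDivisors f ↔ g.Monic ∧ g ∣ f := by
  simp only [monicDivisors, mem_filter, mem_biUnion, mem_range, mem_monics]
  exact ⟨fun ⟨⟨_, _, hg⟩, hgf⟩ => ⟨hg.monic, hgf⟩, fun ⟨hg, hgf⟩ =>
    ⟨⟨g.natDegree, Nat.lt_succ_of_le (natDegree_le_of_dvd hgf hf), ⟨rfl, hg⟩⟩, hgf⟩⟩

theorem monicDivisors_one : monicDivisors (1 : F[X]) = {1} := by
  ext g
  rw [mem_monicDivisors one_ne_zero, mem_singleton]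
  exact ⟨fun ⟨hg, hg1⟩ => hg.eq_one_of_isUnit (isUnit_of_dvd_one hg1), by rintro rfl; simp⟩

theorem sum_monicDivisors_pow_mul {M : Type*} [AddCommMonoid M] (φ : F[X] → M) {p f : F[X]}
    (hp : Irreducible p) (hpm : p.Monic) (hf : f ≠ 0) (hpf : ¬p ∣ f) (e : ℕ) :
    ∑ g ∈ monicDivisors (p ^ e * f), φ g =
      ∑ i ∈ range (e + 1), ∑ g ∈ monicDivisors f, φ (p ^ i * g) := by
  have hpef : p ^ e * f ≠ 0 := mul_ne_zero (pow_ne_zero e hp.ne_zero) hf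
  rw [← sum_product']
  refine (sum_bij (fun x _ => p ^ x.1 * x.2) ?_ ?_ ?_ fun _ _ => rfl).symm
  · rintro ⟨i, g⟩ hx
    obtain ⟨hi, hg⟩ := mem_product.1 hx
    obtain ⟨hgm, hgf⟩ := (mem_monicDivisors hf).1 hg
    exact (mem_monicDivisors hpef).2 ⟨(hpm.pow i).mul hgm,
      mul_dvd_mul (pow_dvd_pow p (Nat.lt_succ_iff.1 (mem_range.1 hi))) hgf⟩
  · rintro ⟨i, g⟩ hx ⟨j, h⟩ hy hij
    have hpg : ¬p ∣ g := fun hd =>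
      hpf (hd.trans ((mem_monicDivisors hf).1 (mem_product.1 hx).2).2)
    have hph : ¬p ∣ h := fun hd =>
      hpf (hd.trans ((mem_monicDivisors hf).1 (mem_product.1 hy).2).2)
    obtain ⟨rfl, rfl⟩ := (hp.prime.pow_mul_inj hpg hph).1 hij
    rfl
  · intro g hg
    obtain ⟨hgm, hgf⟩ := (mem_monicDivisors hpef).1 hg
    obtain ⟨g₁, hg, hpg₁⟩ :=
      (FiniteMultiplicity.of_prime_left hp.prime hgm.ne_zero).exists_eq_pow_mul_and_not_dvd
    have hg₁f : g₁ ∣ f := (hp.coprime_pow_of_not_dvd e hpg₁).dvd_of_dvd_mul_left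
      ((Dvd.intro_left _ hg.symm).trans hgf)
    have hie : multiplicity p g ≤ e := by
      have := hp.prime.pow_dvd_of_dvd_mul_right _ hpf ((Dvd.intro _ hg.symm).trans hgf)
      exact (pow_dvd_pow_iff hp.ne_zero hp.not_isUnit).1 this
    refine ⟨(multiplicity p g, g₁), mem_product.2 ⟨mem_range.2 (Nat.lt_succ_of_le hie), ?_⟩,
      hg.symm⟩
    exact (mem_monicDivisors hf).2 ⟨(hpm.pow _).of_mul_monic_left (hg ▸ hgm), hg₁f⟩

theorem sum_liouville_monicDivisors {f : F[X]} (hf : f.Monic) :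
    ∑ g ∈ monicDivisors f, liouville g = if IsSquare f then 1 else 0 := by
  induction hn : f.natDegree using Nat.strong_induction_on generalizing f with
  | _ n ih =>
  by_cases hu : IsUnit f
  · rw [hf.eq_one_of_isUnit hu, monicDivisors_one, sum_singleton, if_pos IsSquare.one, liouville,
      bigOmega_one, pow_zero]
  obtain ⟨p, hpm, hp, hpf⟩ := exists_monic_irreducible_factor f hu
  obtain ⟨f₁, hfe, hpf₁⟩ :=
    (FiniteMultiplicity.of_prime_left hp.prime hf.ne_zero).exists_eq_pow_mul_and_not_dvd
  set e := multiplicity p f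
  have hf₁ : f₁.Monic := (hpm.pow e).of_mul_monic_left (hfe ▸ hf)
  have he : e ≠ 0 := fun he => hpf₁ (by rwa [hfe, he, pow_zero, one_mul] at hpf)
  have hlt : f₁.natDegree < n := by
    rw [← hn, hfe, (hpm.pow e).natDegree_mul hf₁, natDegree_pow]
    exact Nat.lt_add_of_pos_left (Nat.mul_pos (Nat.pos_of_ne_zero he) hp.natDegree_pos)
  have hrow : ∀ i ∈ range (e + 1), ∑ g ∈ monicDivisors f₁, liouville (p ^ i * g) =
      (-1) ^ i * ∑ g ∈ monicDivisors f₁, liouville g := fun i _ => by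
    rw [mul_sum]
    exact sum_congr rfl fun g hg =>
      hp.liouville_pow_mul ((mem_monicDivisors hf₁.ne_zero).1 hg).1.ne_zero i
  rw [hfe, sum_monicDivisors_pow_mul _ hp hpm hf₁.ne_zero hpf₁, sum_congr rfl hrow, ← sum_mul,
    neg_one_geom_sum, ih _ hlt hf₁ rfl, hp.prime.isSquare_pow_mul_iff hpf₁]
  by_cases he' : Even e <;> simp [he', Nat.even_add_one]

theorem card_filter_isSquare_monics (n : ℕ) :
    #((monics F n).filter IsSquare) = if Even n then Fintype.card F ^ (n / 2) else 0 := by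
  split_ifs with hn
  · obtain ⟨m, rfl⟩ := hn
    rw [show (m + m) / 2 = m by omega, ← card_monics F m]
    refine (card_nbij (fun g => g * g) (fun g hg => ?_) (fun A hA B hB h => ?_)
      fun f hf => ?_).symm
    · have hg := mem_monics.1 hg
      exact mem_filter.2 ⟨mem_monics.2 (hg.mul hg), g, rfl⟩
    · exact (mem_monics.1 hA).monic.eq_of_mul_self_eq_mul_self (mem_monics.1 hB).monic h
    · obtain ⟨hf, r, rfl⟩ := mem_filter.1 hf
      have hf := mem_monics.1 hf
      have hu : r.leadingCoeff * r.leadingCoeff = 1 := by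
        rw [← leadingCoeff_mul, hf.monic.leadingCoeff]
      have hN : (C r.leadingCoeff * r).Monic := by
        rw [Monic, leadingCoeff_mul, leadingCoeff_C, hu]
      have hNN : C r.leadingCoeff * r * (C r.leadingCoeff * r) = r * r := by
        rw [mul_mul_mul_comm, ← C_mul, hu, C_1, one_mul]
      refine ⟨C r.leadingCoeff * r, mem_monics.2 ⟨?_, hN⟩, hNN⟩
      have := hf.natDegree_eq
      rw [← hNN, hN.natDegree_mul hN] at this
      omega
  · refine card_eq_zero.2 (filter_eq_empty_iff.2 fun f hf ⟨r, hr⟩ => hn ?_)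
    have hr0 : r ≠ 0 := by rintro rfl; exact (mem_monics.1 hf).ne_zero (by simpa using hr)
    rw [← (mem_monics.1 hf).natDegree_eq, hr, natDegree_mul hr0 hr0]
    exact ⟨_, rfl⟩

theorem card_filter_dvd_monics {g : F[X]} {k n : ℕ} (hg : IsMonicOfDegree g k) (hkn : k ≤ n) :
    #((monics F n).filter (g ∣ ·)) = Fintype.card F ^ (n - k) := by
  rw [← card_monics F (n - k)]
  refine (card_nbij (g * ·) (fun h hh => ?_) (fun _ _ _ _ h => mul_left_cancel₀ hg.ne_zero h)
    fun f hf => ?_).symm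
  · exact mem_filter.2 ⟨mem_monics.2 (Nat.add_sub_cancel' hkn ▸ hg.mul (mem_monics.1 hh)),
      dvd_mul_right g h⟩
  · obtain ⟨hf, h, rfl⟩ := mem_filter.1 hf
    rw [← Nat.add_sub_cancel' hkn, mem_monics] at hf
    exact ⟨h, mem_monics.2 (hg.of_mul_left hf), rfl⟩

theorem sum_range_pow_mul_sum_liouville_monics (n : ℕ) :
    ∑ k ∈ range (n + 1), (Fintype.card F : ℤ) ^ (n - k) * ∑ g ∈ monics F k, liouville g =
      if Even n then (Fintype.card F : ℤ) ^ (n / 2) else 0 := by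
  have hswap : ∀ f g, f ∈ monics F n ∧ g ∈ monicDivisors f ↔
      f ∈ (monics F n).filter (g ∣ ·) ∧ g ∈ (range (n + 1)).biUnion (monics F) := fun f g => by
    simp only [monicDivisors, mem_filter]
    constructor
    · rintro ⟨hf, hg, hgf⟩
      exact ⟨⟨hf, hgf⟩, (mem_monics.1 hf).natDegree_eq ▸ hg⟩
    · rintro ⟨⟨hf, hgf⟩, hg⟩
      exact ⟨hf, (mem_monics.1 hf).natDegree_eq ▸ hg, hgf⟩
  calc ∑ k ∈ range (n + 1), (Fintype.card F : ℤ) ^ (n - k) * ∑ g ∈ monics F k, liouville g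
      = ∑ k ∈ range (n + 1), ∑ g ∈ monics F k, ∑ f ∈ (monics F n).filter (g ∣ ·), liouville g := by
        refine sum_congr rfl fun k hk => ?_
        rw [mul_sum]
        refine sum_congr rfl fun g hg => ?_
        rw [sum_const, card_filter_dvd_monics (mem_monics.1 hg)
          (Nat.lt_succ_iff.1 (mem_range.1 hk)), nsmul_eq_mul, Nat.cast_pow]
    _ = ∑ f ∈ monics F n, ∑ g ∈ monicDivisors f, liouville g := by
        rw [← sum_biUnion (pairwiseDisjoint_monics _), sum_comm' hswap]
    _ = ∑ f ∈ monics F n, if IsSquare f then 1 else 0 :=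
        sum_congr rfl fun f hf => sum_liouville_monicDivisors (mem_monics.1 hf).monic
    _ = if Even n then (Fintype.card F : ℤ) ^ (n / 2) else 0 := by
        rw [sum_boole, card_filter_isSquare_monics]
        split_ifs <;> simp

theorem sum_liouville_monics (n : ℕ) :
    ∑ f ∈ monics F n, liouville f = (-1) ^ n * (Fintype.card F : ℤ) ^ ((n + 1) / 2) := by
  cases n with
  | zero => simpa using sum_range_pow_mul_sum_liouville_monics (F := F) 0
  | succ n =>
    set q : ℤ := (Fintype.card F : ℤ)
    have hstep : ∑ k ∈ range (n + 1), q ^ (n + 1 - k) * ∑ g ∈ monics F k, liouville g =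
        q * ∑ k ∈ range (n + 1), q ^ (n - k) * ∑ g ∈ monics F k, liouville g := by
      rw [mul_sum]
      refine sum_congr rfl fun k hk => ?_
      rw [Nat.sub_add_comm (Nat.lt_succ_iff.1 (mem_range.1 hk)), pow_succ']
      ring
    have hrec := sum_range_pow_mul_sum_liouville_monics (F := F) (n + 1)
    rw [sum_range_succ, hstep, sum_range_pow_mul_sum_liouville_monics, Nat.sub_self, pow_zero,
      one_mul] at hrec
    rcases Nat.even_or_odd' n with ⟨t, rfl | rfl⟩
    · rw [if_pos (even_two_mul t), if_neg t.not_even_two_mul_add_one,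
        show 2 * t / 2 = t by omega] at hrec
      rw [show (2 * t + 1 + 1) / 2 = t + 1 by omega, pow_succ, pow_mul, neg_one_sq, one_pow]
      linear_combination hrec
    · rw [if_neg t.not_even_two_mul_add_one, if_pos ⟨t + 1, by ring⟩,
        show (2 * t + 1 + 1) / 2 = t + 1 by omega] at hrec
      rw [show (2 * t + 1 + 1 + 1) / 2 = t + 1 by omega, show 2 * t + 1 + 1 = 2 * (t + 1) by ring,
        pow_mul, neg_one_sq, one_pow]
      linear_combination hrec

end Divisors
end Polynomial

theorem statement8_general (F : Type*) [Field F] [Fintype F] (d : ℕ) :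
    2 * Nat.card {f : F[X] // f.Monic ∧ f.natDegree = d ∧
        (-1 : ℤ) ^ (d - bigOmega f) = 1} =
      Fintype.card F ^ d + Fintype.card F ^ ((d + 1) / 2) := by
  classical
  have hcard : Nat.card {f : F[X] // f.Monic ∧ f.natDegree = d ∧
      (-1 : ℤ) ^ (d - bigOmega f) = 1} =
      #((monics F d).filter fun f => (-1 : ℤ) ^ (d - bigOmega f) = 1) := by
    rw [← Nat.card_eq_finsetCard]
    exact Nat.card_congr (Equiv.subtypeEquivRight fun f => by
      simp only [mem_filter, mem_monics, isMonicOfDegree_iff']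
      tauto)
  have hsum : ∑ f ∈ monics F d, (-1 : ℤ) ^ (d - bigOmega f) =
      (Fintype.card F : ℤ) ^ ((d + 1) / 2) := by
    rw [sum_congr rfl fun f hf => (mem_monics.1 hf).neg_one_pow_sub_bigOmega, ← mul_sum,
      sum_liouville_monics, ← mul_assoc, ← mul_pow, neg_one_mul, neg_neg, one_pow, one_mul]
  rw [hcard]
  zify
  rw [two_mul_card_filter_neg_one_pow_eq_one, card_monics, hsum]
  push_cast
  rfl

/-- Twice the number of monic degree-`d` polynomials over `F_q` of even type
(`(-1)^(d - Ω(f)) = 1`) equals `q^d + q^⌈d/2⌉`. -/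
theorem statement8 (F : Type*) [Field F] [Fintype F] (d : ℕ) (hd : 0 < d) :
    2 * Nat.card {f : F[X] // f.Monic ∧ f.natDegree = d ∧
        (-1 : ℤ) ^ (d - bigOmega f) = 1} =
      Fintype.card F ^ d + Fintype.card F ^ ((d + 1) / 2) :=
  statement8_general F d
end

section
/- Let F_q be a finite field and d an integer with d \geq 2. For a monic squarefree polynomial f of degree d in F_q[x], let \Omega(f) denote the number of irreducible factors of f (counted with multiplicity, which is without multiplicity since f is squarefree). Then \sum_{f} (-1)^{d - \Omega(f)} = 0, where the sum runs over all monic squarefree polynomials f of degree d in F_q[x]. Equivalently, exactly half of the monic squarefree polynomials of degree d in F_q[x] have even factorization type. -/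
/-!
Writing `μ` for the Möbius function of `F[X]`, the sum equals `(-1)^d * S_d` with
`S_k = ∑ μ(f)` over monic `f` of degree `k`. Counting the pairs `f ∣ h` with `h` monic of degree
`d` in two ways gives `∑_{k ≤ d} S_k q^(d-k) = 0` for `d ≥ 1`: a monic `f` of degree `k` has
`q^(d-k)` monic multiples of degree `d`, and the monic divisors of a nonconstant `h` contribute
`∑_{T ⊆ P} (-1)^|T| = 0`, where `P` is the nonempty set of monic irreducible factors of `h`.
Subtracting `q` times the identity for `d - 1` leaves `S_d = 0` for `d ≥ 2`.
-/

open Polynomial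

namespace UniqueFactorizationMonoid

variable {α : Type*} [CommMonoidWithZero α] [StrongNormalizationMonoid α]
  [UniqueFactorizationMonoid α]

theorem normalizedFactors_prod_of_subset {a : α} {m : Multiset α}
    (hm : m ⊆ normalizedFactors a) : normalizedFactors m.prod = m := by
  rw [normalizedFactors_prod_eq m fun p hp => irreducible_of_normalized_factor p (hm hp)]
  exact (Multiset.map_congr rfl fun p hp => normalize_normalized_factor p (hm hp)).trans
    (Multiset.map_id' m)

theorem normalize_prod_of_subset {a : α} {m : Multiset α}
    (hm : m ⊆ normalizedFactors a) : normalize m.prod = m.prod := by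
  rw [← coe_normalizeHom, map_multiset_prod, coe_normalizeHom]
  exact congrArg Multiset.prod <| (Multiset.map_congr rfl fun p hp =>
    normalize_normalized_factor p (hm hp)).trans (Multiset.map_id' m)

theorem sum_moebius_normalized_divisors_eq_zero {h : α} (hh : h ≠ 0) (hu : ¬IsUnit h) {s : Finset α}
    (hs : ∀ f, f ∈ s ↔ normalize f = f ∧ f ∣ h) : ∑ f ∈ s, moebius f = 0 := by
  classical
  have := nontrivial_of_ne h 0 hh
  have hP : (normalizedFactors h).toFinset.Nonempty := by
    rw [Multiset.toFinset_nonempty, Ne, normalizedFactors_eq_zero_iff hh]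
    exact hu
  have nodup {f : α} (hf : f ∈ s.filter Squarefree) : (normalizedFactors f).Nodup := by
    have hf := (Finset.mem_filter.1 hf).2
    exact (squarefree_iff_nodup_normalizedFactors hf.ne_zero).1 hf
  rw [← Finset.sum_filter_of_ne (p := Squarefree) fun f _ hf => by_contra fun hsq =>
      hf (moebius_of_not_squarefree hsq), ← Finset.sum_powerset_neg_one_pow_card_of_nonempty hP]
  -- A squarefree normalized divisor of `h` is the product of a subset of the prime factors of `h`.
  refine Finset.sum_nbij' (fun f => (normalizedFactors f).toFinset) (fun T => T.val.prod)
    ?_ ?_ ?_ ?_ ?_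
  · intro f hf
    obtain ⟨⟨-, hfh⟩, hsq⟩ := Finset.mem_filter.1 hf |>.imp_left (hs f).1
    rw [Finset.mem_powerset]
    exact Multiset.toFinset_subset.2 <| Multiset.subset_of_le <|
      (dvd_iff_normalizedFactors_le_normalizedFactors hsq.ne_zero hh).1 hfh
  · intro T hT
    rw [Finset.mem_powerset, ← Finset.val_le_iff, Multiset.toFinset_val,
      Multiset.le_dedup] at hT
    have hsub := Multiset.subset_of_le hT.1
    have hne : T.val.prod ≠ 0 := prod_ne_zero_of_subset_normalizedFactors hsub
    rw [Finset.mem_filter, hs, normalize_prod_of_subset hsub,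
      squarefree_iff_nodup_normalizedFactors hne, normalizedFactors_prod_of_subset hsub]
    refine ⟨⟨rfl, ?_⟩, T.nodup⟩
    calc T.val.prod ∣ (normalizedFactors h).prod := Multiset.prod_dvd_prod_of_le hT.1
      _ ∣ h := (prod_normalizedFactors hh).dvd
  · intro f hf
    obtain ⟨⟨hfn, -⟩, hsq⟩ := Finset.mem_filter.1 hf |>.imp_left (hs f).1
    rw [Multiset.toFinset_val, Multiset.dedup_eq_self.2 (nodup hf),
      prod_normalizedFactors_eq hsq.ne_zero, hfn]
  · intro T hT
    rw [Finset.mem_powerset] at hT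
    rw [normalizedFactors_prod_of_subset fun p hp => Multiset.mem_toFinset.1 (hT hp),
      Finset.val_toFinset]
  · intro f hf
    rw [(Finset.mem_filter.1 hf).2.moebius_eq, Multiset.card_toFinset,
      Multiset.dedup_eq_self.2 (nodup hf), normalizedFactors, Multiset.card_map]

end UniqueFactorizationMonoid

open UniqueFactorizationMonoid Finset

namespace Polynomial

section MonicOfDegree

variable (R : Type*) [CommRing R] [Nontrivial R] [Fintype R]

noncomputable instance (n : ℕ) : Fintype {p : R[X] // p.Monic ∧ p.natDegree = n} :=
  Fintype.ofEquiv _ ((monicEquivDegreeLT n).trans (degreeLTEquiv R n).toEquiv).symm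

noncomputable def monicOfDegree (n : ℕ) : Finset R[X] :=
  univ.map (.subtype fun p : R[X] => p.Monic ∧ p.natDegree = n)

variable {R}

@[simp]
theorem mem_monicOfDegree {n : ℕ} {p : R[X]} :
    p ∈ monicOfDegree R n ↔ p.Monic ∧ p.natDegree = n := by
  simp [monicOfDegree]

theorem card_monicOfDegree (n : ℕ) : #(monicOfDegree R n) = Fintype.card R ^ n := by
  rw [monicOfDegree, card_map, card_univ,
    Fintype.card_congr ((monicEquivDegreeLT n).trans (degreeLTEquiv R n).toEquiv)]
  simp

open scoped Classical in
theorem card_monicOfDegree_filter_dvd {f : R[X]} (hf : f.Monic) {n : ℕ}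
    (hn : f.natDegree ≤ n) :
    #{h ∈ monicOfDegree R n | f ∣ h} = Fintype.card R ^ (n - f.natDegree) := by
  rw [← card_monicOfDegree]
  have mul_divByMonic_eq {h : R[X]} (hfh : f ∣ h) : f * (h /ₘ f) = h := by
    simpa [(modByMonic_eq_zero_iff_dvd hf).2 hfh] using modByMonic_add_div h f
  refine card_nbij' (· /ₘ f) (f * ·) ?_ ?_ ?_ ?_
  · intro h hh
    simp only [coe_filter, mem_monicOfDegree, Set.mem_ofPred_eq] at hh
    obtain ⟨⟨hm, rfl⟩, hfh⟩ := hh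
    have hq : (h /ₘ f).Monic := hf.of_mul_monic_left (by rwa [mul_divByMonic_eq hfh])
    refine mem_monicOfDegree.2 ⟨hq, ?_⟩
    have := hf.natDegree_mul hq
    rw [mul_divByMonic_eq hfh] at this
    dsimp only
    omega
  · intro g hg
    obtain ⟨hg, hdeg⟩ := mem_monicOfDegree.1 hg
    simp only [coe_filter, mem_monicOfDegree, Set.mem_ofPred_eq]
    exact ⟨⟨hf.mul hg, by rw [hf.natDegree_mul hg]; omega⟩, dvd_mul_right f g⟩
  · intro h hh
    exact mul_divByMonic_eq (mem_filter.1 hh).2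
  · intro g _
    exact mul_divByMonic_cancel_left g hf

end MonicOfDegree

section FiniteField

variable {F : Type*} [Field F]

theorem card_factors_le_natDegree (f : F[X]) : Multiset.card (factors f) ≤ f.natDegree := by
  rcases eq_or_ne f 0 with rfl | hf
  · simp
  have hdeg : ∀ p ∈ (factors f).map natDegree, 1 ≤ p := by
    simp only [Multiset.mem_map]
    rintro _ ⟨p, hp, rfl⟩
    exact natDegree_pos_iff_degree_pos.2 (degree_pos_of_irreducible (irreducible_of_factor p hp))
  calc Multiset.card (factors f) = Multiset.card ((factors f).map natDegree) • 1 := by simp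
    _ ≤ ((factors f).map natDegree).sum := Multiset.card_nsmul_le_sum hdeg
    _ = (factors f).prod.natDegree :=
      (natDegree_multiset_prod _ fun h0 => (prime_of_factor 0 h0).ne_zero rfl).symm
    _ = f.natDegree := natDegree_eq_of_degree_eq (degree_eq_degree_of_associated (factors_prod hf))

theorem sum_moebius_monic_divisors_eq_zero {h : F[X]} (hh : h.Monic) (hd : 0 < h.natDegree)
    {s : Finset F[X]} (hs : ∀ f, f ∈ s ↔ f.Monic ∧ f ∣ h) : ∑ f ∈ s, moebius f = 0 := by
  classical
  refine sum_moebius_normalized_divisors_eq_zero hh.ne_zero (fun hu => ?_) fun f => ?_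
  · rw [hh.isUnit_iff.1 hu, natDegree_one] at hd
    exact hd.false
  rw [hs]
  refine ⟨fun ⟨hf, hfh⟩ => ⟨hf.normalize_eq_self, hfh⟩, fun ⟨hf, hfh⟩ => ⟨?_, hfh⟩⟩
  have hf0 : f ≠ 0 := ne_zero_of_dvd_ne_zero hh.ne_zero hfh
  exact (normalize_eq_self_iff_monic hf0).1 hf

variable [Fintype F]

theorem sum_range_sum_moebius_mul_pow_eq_zero {d : ℕ} (hd : 0 < d) :
    ∑ k ∈ range (d + 1), (∑ f ∈ monicOfDegree F k, moebius f) * (Fintype.card F : ℤ) ^ (d - k)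
      = 0 := by
  classical
  have hdisj : (range (d + 1) : Set ℕ).PairwiseDisjoint (monicOfDegree F) :=
    fun k _ l _ hkl => disjoint_left.2 fun f hk hl =>
      hkl ((mem_monicOfDegree.1 hk).2.symm.trans (mem_monicOfDegree.1 hl).2)
  calc _ = ∑ k ∈ range (d + 1), ∑ f ∈ monicOfDegree F k, ∑ h ∈ monicOfDegree F d,
        if f ∣ h then moebius f else 0 := by
        refine sum_congr rfl fun k hk => ?_
        rw [sum_mul]
        refine sum_congr rfl fun f hf => ?_
        obtain ⟨hmonic, rfl⟩ := mem_monicOfDegree.1 hf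
        rw [← sum_filter, sum_const, card_monicOfDegree_filter_dvd hmonic
          (Nat.lt_succ_iff.1 (mem_range.1 hk)), nsmul_eq_mul, mul_comm,
          Nat.cast_pow]
    _ = ∑ h ∈ monicOfDegree F d,
          ∑ f ∈ (range (d + 1)).biUnion (monicOfDegree F) with f ∣ h, moebius f := by
        rw [← sum_biUnion hdisj, sum_comm]
        simp_rw [sum_filter]
    _ = 0 := sum_eq_zero fun h hh => by
        obtain ⟨hmonic, rfl⟩ := mem_monicOfDegree.1 hh
        refine sum_moebius_monic_divisors_eq_zero hmonic hd fun f => ?_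
        simp only [mem_filter, mem_biUnion, mem_range, mem_monicOfDegree, Nat.lt_succ_iff]
        exact ⟨fun ⟨⟨k, hk, hf, hfk⟩, hfh⟩ => ⟨hf, hfh⟩, fun ⟨hf, hfh⟩ =>
          ⟨⟨f.natDegree, natDegree_le_of_dvd hfh hmonic.ne_zero, hf, rfl⟩, hfh⟩⟩

theorem sum_moebius_monicOfDegree_eq_zero {d : ℕ} (hd : 2 ≤ d) :
    ∑ f ∈ monicOfDegree F d, moebius f = 0 := by
  obtain ⟨e, rfl⟩ := Nat.exists_eq_add_of_le' hd
  have hsucc := sum_range_sum_moebius_mul_pow_eq_zero (F := F) (d := e + 2) (by omega)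
  have hprev := sum_range_sum_moebius_mul_pow_eq_zero (F := F) (d := e + 1) (by omega)
  have hshift : ∑ k ∈ range (e + 2), (∑ f ∈ monicOfDegree F k, moebius f) *
        (Fintype.card F : ℤ) ^ (e + 2 - k) = (Fintype.card F : ℤ) *
      ∑ k ∈ range (e + 2), (∑ f ∈ monicOfDegree F k, moebius f) *
        (Fintype.card F : ℤ) ^ (e + 1 - k) := by
    rw [mul_sum]
    refine sum_congr rfl fun k hk => ?_
    rw [show e + 2 - k = e + 1 - k + 1 by have := mem_range.1 hk; omega, pow_succ]
    ring
  rwa [sum_range_succ, hshift, hprev, mul_zero, zero_add, Nat.sub_self, pow_zero, mul_one]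
    at hsucc

end FiniteField

end Polynomial

/-- For `d ≥ 2`, the sum of `(-1)^(d - Ω(f))` over all monic squarefree degree-`d`
polynomials over `F_q` equals `0`: exactly half of them have even factorization type. -/
theorem statement9 (F : Type*) [Field F] [Fintype F] (d : ℕ) (hd : 2 ≤ d) :
    ∑ᶠ f ∈ {f : F[X] | f.Monic ∧ f.natDegree = d ∧ Squarefree f},
      (-1 : ℤ) ^ (d - bigOmega f) = 0 := by
  classical
  have hset : {f : F[X] | f.Monic ∧ f.natDegree = d ∧ Squarefree f}
      = ↑{f ∈ monicOfDegree F d | Squarefree f} := by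
    ext f
    simp [and_assoc]
  have hsign {f : F[X]} (hf : f.natDegree = d) :
      (-1 : ℤ) ^ (d - bigOmega f) = (-1) ^ d * (-1) ^ bigOmega f := by
    obtain ⟨c, hc⟩ := Nat.exists_eq_add_of_le (hf ▸ card_factors_le_natDegree f)
    rw [hc, bigOmega, Nat.add_sub_cancel_left, pow_add, mul_right_comm, ← pow_add,
      Even.neg_one_pow ⟨_, rfl⟩, one_mul]
  rw [hset, finsum_mem_coe_finset, sum_filter]
  calc ∑ f ∈ monicOfDegree F d, (if Squarefree f then (-1 : ℤ) ^ (d - bigOmega f) else 0)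
      = ∑ f ∈ monicOfDegree F d, (-1) ^ d * moebius f := by
        refine sum_congr rfl fun f hf => ?_
        split_ifs with hsq
        · rw [hsq.moebius_eq, hsign (mem_monicOfDegree.1 hf).2, bigOmega]
        · rw [moebius_of_not_squarefree hsq, mul_zero]
    _ = 0 := by rw [← mul_sum, sum_moebius_monicOfDegree_eq_zero hd, mul_zero]
end
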